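/- Let k ∈ ℤ, k ≥ -1, and for 1 ≤ i ≤ k+2 define h_i(x,y) = -i² + ki - 3xi + 3i - 3x² - k + 2kx + 6x + ky + 3y - 2. For each i with 1 ≤ i ≤ k+2, the point (x^i, y^i) = ((1-i)/3, ((i-1)(i-1-k))/(3(k+3))) satisfies h_i(x^i, y^i) = 0 and h_{k+2}(x^i, y^i) = 0, and moreover h_j(x^i, y^i) ≠ 0 for every integer j with 1 ≤ j < i. -/

import Mathlib

noncomputable def h (k j x y : ℂ) : ℂ :=
  -j ^ 2 + k * j - 3 * x * j + 3 * j - 3 * x ^ 2 - k + 2 * k * x + 6 * x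
    + k * y + 3 * y - 2

lemma h_eq_mul (k i j : ℂ) (hk : k + 3 ≠ 0) :
    h k j ((1 - i) / 3) ((i - 1) * (i - 1 - k) / (3 * (k + 3))) = (i - j) * (j - 2 - k) := by
  unfold h
  field_simp
  ring

theorem stmt_19_general (k : ℤ) (hk : -1 ≤ k) (i : ℤ) (hi2 : i ≤ k + 2) :
    h (k : ℂ) (i : ℂ) ((1 - (i : ℂ)) / 3)
        (((i : ℂ) - 1) * ((i : ℂ) - 1 - (k : ℂ)) / (3 * ((k : ℂ) + 3))) = 0 ∧
    h (k : ℂ) ((k : ℂ) + 2) ((1 - (i : ℂ)) / 3)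
        (((i : ℂ) - 1) * ((i : ℂ) - 1 - (k : ℂ)) / (3 * ((k : ℂ) + 3))) = 0 ∧
    ∀ j : ℤ, 1 ≤ j → j < i →
      h (k : ℂ) (j : ℂ) ((1 - (i : ℂ)) / 3)
        (((i : ℂ) - 1) * ((i : ℂ) - 1 - (k : ℂ)) / (3 * ((k : ℂ) + 3))) ≠ 0 := by
  have hk3 : (k : ℂ) + 3 ≠ 0 := by exact_mod_cast (by omega : k + 3 ≠ 0)
  simp only [h_eq_mul _ _ _ hk3]
  refine ⟨by ring, by ring, fun j _ hji => mul_ne_zero ?_ ?_⟩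
  · exact_mod_cast (by omega : i - j ≠ 0)
  · exact_mod_cast (by omega : j - 2 - k ≠ 0)

theorem stmt_19 (k : ℤ) (hk : -1 ≤ k) (i : ℤ) (hi1 : 1 ≤ i) (hi2 : i ≤ k + 2) :
    h (k : ℂ) (i : ℂ) ((1 - (i : ℂ)) / 3)
        (((i : ℂ) - 1) * ((i : ℂ) - 1 - (k : ℂ)) / (3 * ((k : ℂ) + 3))) = 0 ∧
    h (k : ℂ) ((k : ℂ) + 2) ((1 - (i : ℂ)) / 3)
        (((i : ℂ) - 1) * ((i : ℂ) - 1 - (k : ℂ)) / (3 * ((k : ℂ) + 3))) = 0 ∧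
    ∀ j : ℤ, 1 ≤ j → j < i →
      h (k : ℂ) (j : ℂ) ((1 - (i : ℂ)) / 3)
        (((i : ℂ) - 1) * ((i : ℂ) - 1 - (k : ℂ)) / (3 * ((k : ℂ) + 3))) ≠ 0 :=
  stmt_19_general k hk i hi2
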